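/- Let (A, τ) be a tracial probability space, ρ: S∞ → Aut(A, τ) a trace-preserving action, and x₀ ∈ A with ρ(σₙ)(x₀) = x₀ for all n ≥ 2 (where σₙ are the Coxeter generators). Define xₙ := ρ(σₙσ_{n−1}⋯σ₁)(x₀) for n ≥ 1. Then the sequence (xₙ)ₙ≥₀ is exchangeable. -/
import Mathlib


/-- The infinite symmetric group `S∞`: the subgroup of finitary permutations of
`ℕ₀ = {0, 1, 2, ...}`. -/
def SymmInf : Subgroup (Equiv.Perm ℕ) where
  carrier := {π | {x | π x ≠ x}.Finite}
  one_mem' := by simp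
  mul_mem' := by
    intro a b ha hb
    refine (ha.union hb).subset ?_
    intro x hx
    simp only [Set.mem_union, Set.mem_setOf_eq]
    by_contra hc
    push_neg at hc
    exact hx (by simp [Equiv.Perm.mul_apply, hc.1, hc.2])
  inv_mem' := by
    intro a ha
    have h : {x | a⁻¹ x ≠ x} = {x | a x ≠ x} := by
      ext x
      simp only [Set.mem_setOf_eq, ne_eq]
      rw [not_iff_not]
      exact ⟨fun h => (Equiv.Perm.inv_eq_iff_eq.mp h).symm,
        fun h => Equiv.Perm.inv_eq_iff_eq.mpr h.symm⟩
    exact show {x | a⁻¹ x ≠ x}.Finite from h ▸ ha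

/-- The Coxeter generator `σᵢ = (i-1, i)` as an element of `S∞`. -/
def coxGen (i : ℕ+) : SymmInf :=
  ⟨Equiv.swap ((i : ℕ) - 1) (i : ℕ), by
    refine ((Set.finite_singleton ((i : ℕ) - 1)).insert (i : ℕ)).subset ?_
    intro x hx
    simp only [Set.mem_insert_iff, Set.mem_singleton_iff]
    by_contra hc
    push_neg at hc
    exact hx (Equiv.swap_apply_of_ne_of_ne hc.2 hc.1)⟩

/-- The descending word `σₙ σₙ₋₁ ⋯ σ₁` in `S∞` (empty for `n = 0`). -/
def coxWord : ℕ → SymmInf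
  | 0 => 1
  | n + 1 => coxGen n.succPNat * coxWord n

/-- A `*`-monomial in the random variables `xₙ`. -/
def starWord {A : Type*} [Monoid A] [Star A] (x : ℕ → A) (l : List (ℕ × Bool)) : A :=
  (l.map fun p => if p.2 then star (x p.1) else x p.1).prod


/-- Auxiliary: any transposition is in `S∞`. -/
lemma swap_mem_symmInf (a b : ℕ) : Equiv.swap a b ∈ SymmInf := by
  refine ((Set.finite_singleton a).insert b).subset ?_
  intro x hx
  simp only [Set.mem_insert_iff, Set.mem_singleton_iff]
  by_contra hc
  push_neg at hc
  exact hx (Equiv.swap_apply_of_ne_of_ne hc.2 hc.1)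

lemma coxGen_succ (j : ℕ) : coxGen j.succPNat =
    (⟨Equiv.swap j (j+1), swap_mem_symmInf j (j+1)⟩ : SymmInf) := by
  apply Subtype.ext
  show Equiv.swap ((j.succPNat : ℕ) - 1) (j.succPNat : ℕ) = Equiv.swap j (j+1)
  simp [Nat.succPNat]

lemma coxWord_apply_zero : ∀ n : ℕ, ((coxWord n : SymmInf) : Equiv.Perm ℕ) 0 = n := by
  intro n
  induction n with
  | zero => rfl
  | succ n ih =>
    show ((coxGen n.succPNat * coxWord n : SymmInf) : Equiv.Perm ℕ) 0 = n + 1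
    rw [coxGen_succ]
    push_cast [Subgroup.coe_mul]
    show Equiv.swap n (n+1) (((coxWord n : SymmInf) : Equiv.Perm ℕ) 0) = n + 1
    rw [ih, Equiv.swap_apply_left]

section auxRho
variable {H : Type} [NormedAddCommGroup H] [InnerProductSpace ℂ H] [CompleteSpace H]
  {M : VonNeumannAlgebra H}
  (ρ : SymmInf →* (M.toStarSubalgebra ≃ₐ[ℂ] M.toStarSubalgebra))
  (x₀ : M.toStarSubalgebra)
  (hloc : ∀ i : ℕ+, 2 ≤ (i : ℕ) → ρ (coxGen i) x₀ = x₀)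

include hloc

lemma rho_swap_adj (j : ℕ) (hj : 1 ≤ j) :
    ρ ⟨Equiv.swap j (j+1), swap_mem_symmInf j (j+1)⟩ x₀ = x₀ := by
  rw [← coxGen_succ]
  exact hloc j.succPNat (by simp [Nat.succPNat]; omega)

lemma rho_swap_aux : ∀ d a : ℕ, 1 ≤ a →
    ρ ⟨Equiv.swap a (a + d + 1), swap_mem_symmInf a (a + d + 1)⟩ x₀ = x₀ := by
  intro d
  induction d with
  | zero => intro a ha; exact rho_swap_adj ρ x₀ hloc a ha
  | succ d ih =>
    intro a ha
    have key : Equiv.swap a (a + d + 2) =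
        Equiv.swap (a+d+1) (a+d+2) * Equiv.swap a (a+d+1) * Equiv.swap (a+d+1) (a+d+2) := by
      rw [Equiv.swap_mul_swap_mul_swap (by omega) (by omega), Equiv.swap_comm]
    have heq : (⟨Equiv.swap a (a + (d+1) + 1), swap_mem_symmInf _ _⟩ : SymmInf) =
        ⟨Equiv.swap (a+d+1) (a+d+2), swap_mem_symmInf _ _⟩ *
        ⟨Equiv.swap a (a+d+1), swap_mem_symmInf _ _⟩ *
        ⟨Equiv.swap (a+d+1) (a+d+2), swap_mem_symmInf _ _⟩ := by
      apply Subtype.ext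
      show Equiv.swap a (a + (d+1) + 1) = _
      rw [show a + (d+1) + 1 = a + d + 2 by omega, key]; rfl
    rw [heq, map_mul, map_mul, AlgEquiv.mul_apply, AlgEquiv.mul_apply,
      rho_swap_adj ρ x₀ hloc (a+d+1) (by omega), ih a ha,
      rho_swap_adj ρ x₀ hloc (a+d+1) (by omega)]

lemma rho_swap (a b : ℕ) (ha : 1 ≤ a) (hab : a < b) :
    ρ ⟨Equiv.swap a b, swap_mem_symmInf a b⟩ x₀ = x₀ := by
  obtain ⟨d, rfl⟩ : ∃ d, b = a + d + 1 := ⟨b - a - 1, by omega⟩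
  exact rho_swap_aux ρ x₀ hloc d a ha

lemma rho_fix_zero_aux : ∀ N : ℕ, ∀ g : Equiv.Perm ℕ, g 0 = 0 →
    (∀ n, N ≤ n → g n = n) → ∀ hg : g ∈ SymmInf, ρ ⟨g, hg⟩ x₀ = x₀ := by
  intro N
  induction N with
  | zero =>
    intro g h0 hfix hg
    have : g = 1 := Equiv.ext fun n => hfix n (Nat.zero_le n)
    subst this
    rw [show (⟨(1 : Equiv.Perm ℕ), hg⟩ : SymmInf) = 1 from rfl, map_one]
    rfl
  | succ N ih =>
    intro g h0 hfix hg
    by_cases hN : g N = N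
    · refine ih g h0 (fun n hn => ?_) hg
      rcases eq_or_lt_of_le hn with h | h
      · exact h ▸ hN
      · exact hfix n h
    · have hN0 : N ≠ 0 := fun h => hN (h ▸ h0)
      set m := g N with hm
      have hmN : m ≠ N := hN
      have hmlt : m < N := by
        rcases lt_or_ge m (N + 1) with h | h
        · omega
        · exact absurd (g.injective ((hfix m h).trans hm)) hmN
      have hm0 : m ≠ 0 := by
        intro h
        exact hN0 (g.injective (hm.symm.trans (h.symm ▸ h0.symm)))
      set g' : Equiv.Perm ℕ := Equiv.swap m N * g with hg'def
      have hg' : g' ∈ SymmInf := Subgroup.mul_mem _ (swap_mem_symmInf m N) hg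
      have h0' : g' 0 = 0 := by
        rw [hg'def, Equiv.Perm.mul_apply, h0,
          Equiv.swap_apply_of_ne_of_ne (Ne.symm hm0) (Ne.symm hN0)]
      have hfix' : ∀ n, N ≤ n → g' n = n := by
        intro n hn
        rcases eq_or_lt_of_le hn with h | h
        · subst h
          rw [hg'def, Equiv.Perm.mul_apply, ← hm, Equiv.swap_apply_left]
        · rw [hg'def, Equiv.Perm.mul_apply, hfix n h,
            Equiv.swap_apply_of_ne_of_ne (by omega) (by omega)]
      have hP' := ih g' h0' hfix' hg'
      have heq : (⟨g, hg⟩ : SymmInf) =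
          ⟨Equiv.swap m N, swap_mem_symmInf m N⟩ * ⟨g', hg'⟩ := by
        apply Subtype.ext
        show g = Equiv.swap m N * g'
        rw [hg'def, ← mul_assoc, Equiv.swap_mul_self, one_mul]
      rw [heq, map_mul, AlgEquiv.mul_apply, hP',
        rho_swap ρ x₀ hloc m N (by omega) hmlt]

lemma rho_fix_zero (g : SymmInf) (h0 : (g : Equiv.Perm ℕ) 0 = 0) : ρ g x₀ = x₀ := by
  have hfin : {x | (g : Equiv.Perm ℕ) x ≠ x}.Finite := g.2
  obtain ⟨N, hN⟩ := hfin.bddAbove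
  have hfix : ∀ n, N + 1 ≤ n → (g : Equiv.Perm ℕ) n = n := by
    intro n hn
    by_contra hc
    have := hN hc
    omega
  have := rho_fix_zero_aux ρ x₀ hloc (N + 1) (g : Equiv.Perm ℕ) h0 hfix g.2
  simpa using this

end auxRho

/-- Constructive procedure for exchangeable sequences: given a trace-preserving
representation `ρ : S∞ → Aut(A, τ)` on a tracial probability space and `x₀` with
`ρ(σₙ)(x₀) = x₀` for all `n ≥ 2`, the sequence `xₙ := ρ(σₙ σₙ₋₁ ⋯ σ₁)(x₀)` is
exchangeable. -/
theorem constructive_procedure_exchangeable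
    {H : Type} [NormedAddCommGroup H] [InnerProductSpace ℂ H] [CompleteSpace H]
    (M : VonNeumannAlgebra H) (τ : M.toStarSubalgebra → ℂ)
    (hlin : IsLinearMap ℂ τ) (hτ1 : τ 1 = 1)
    (hpos : ∀ a, 0 ≤ (τ (star a * a)).re ∧ (τ (star a * a)).im = 0)
    (hfaithful : ∀ a, τ (star a * a) = 0 → a = 0)
    (htracial : ∀ a b, τ (a * b) = τ (b * a))
    (ρ : SymmInf →* (M.toStarSubalgebra ≃ₐ[ℂ] M.toStarSubalgebra))
    (hρstar : ∀ g a, ρ g (star a) = star (ρ g a))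
    (hρτ : ∀ g a, τ (ρ g a) = τ a)
    (x₀ : M.toStarSubalgebra) (hloc : ∀ i : ℕ+, 2 ≤ (i : ℕ) → ρ (coxGen i) x₀ = x₀)
    (x : ℕ → M.toStarSubalgebra) (hx : ∀ n, x n = ρ (coxWord n) x₀) :
    ∀ π : SymmInf, ∀ l : List (ℕ × Bool),
      τ (starWord (fun n => x ((π : Equiv.Perm ℕ) n)) l) = τ (starWord x l) := by
  intro π l
  have key : ∀ n : ℕ, ρ π (x n) = x ((π : Equiv.Perm ℕ) n) := by
    intro n
    set g : SymmInf := (coxWord ((π : Equiv.Perm ℕ) n))⁻¹ * π * coxWord n with hg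
    have h0 : (g : Equiv.Perm ℕ) 0 = 0 := by
      rw [hg]
      simp only [Subgroup.coe_mul, InvMemClass.coe_inv, Equiv.Perm.mul_apply]
      rw [coxWord_apply_zero]
      exact Equiv.Perm.inv_eq_iff_eq.mpr (coxWord_apply_zero _).symm
    have hgfix := rho_fix_zero ρ x₀ hloc g h0
    have hgr : coxWord ((π : Equiv.Perm ℕ) n) * g = π * coxWord n := by
      rw [hg]; group
    calc ρ π (x n) = ρ π (ρ (coxWord n) x₀) := by rw [hx]
      _ = ρ (π * coxWord n) x₀ := by rw [map_mul, AlgEquiv.mul_apply]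
      _ = ρ (coxWord ((π : Equiv.Perm ℕ) n) * g) x₀ := by rw [hgr]
      _ = ρ (coxWord ((π : Equiv.Perm ℕ) n)) (ρ g x₀) := by
          rw [map_mul, AlgEquiv.mul_apply]
      _ = x ((π : Equiv.Perm ℕ) n) := by rw [hgfix, ← hx]
  have hword : ∀ l : List (ℕ × Bool),
      ρ π (starWord x l) = starWord (fun n => x ((π : Equiv.Perm ℕ) n)) l := by
    intro l
    induction l with
    | nil => simpa [starWord] using map_one (ρ π)
    | cons p t ih =>
      simp only [starWord, List.map_cons, List.prod_cons] at ih ⊢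
      rw [map_mul, ih]
      congr 1
      rcases p with ⟨i, b⟩
      cases b
      · simpa using key i
      · simpa [hρstar] using congrArg star (key i)
  rw [← hword l, hρτ]
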